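/- For every integer n ≥ 3 with n ≠ 4 and n ≠ 6, the cycle graph C_n satisfies mob(C_n) = 3. -/

import Mathlib

/-- `S` is a general position set of `G`: no three distinct vertices of `S`
lie on a common shortest path. -/
def IsGPSet {V : Type*} (G : SimpleGraph V) (S : Finset V) : Prop :=
  ∀ x ∈ S, ∀ y ∈ S, ∀ z ∈ S, x ≠ y → y ≠ z → x ≠ z →
    G.dist x y + G.dist y z ≠ G.dist x z

/-- A legal move: one robot moves from an occupied vertex `u` to an adjacent
unoccupied vertex `v` so that the new set of occupied vertices is again in
general position. -/
def LegalMove {V : Type*} [DecidableEq V] (G : SimpleGraph V) (S T : Finset V) : Prop :=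
  ∃ u ∈ S, ∃ v, v ∉ S ∧ G.Adj u v ∧ T = insert v (S.erase u) ∧ IsGPSet G T

/-- `S` is a mobile general position set of `G`: `S` is in general position and
there is a finite sequence of legal moves starting from `S` after which every
vertex of `G` has been occupied at some stage. -/
def IsMobileGPSet {V : Type*} [DecidableEq V] (G : SimpleGraph V) (S : Finset V) : Prop :=
  IsGPSet G S ∧ ∃ (m : ℕ) (f : ℕ → Finset V), f 0 = S ∧
    (∀ i < m, LegalMove G (f i) (f (i + 1))) ∧
    ∀ v : V, ∃ i ≤ m, v ∈ f i

/-- The mobile general position number of `G`. -/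
noncomputable def mob {V : Type*} [DecidableEq V] (G : SimpleGraph V) : ℕ :=
  sSup {n | ∃ S : Finset V, IsMobileGPSet G S ∧ S.card = n}

/-- The general position number of `G`. -/
noncomputable def gpNum {V : Type*} (G : SimpleGraph V) : ℕ :=
  sSup {n | ∃ S : Finset V, IsGPSet G S ∧ S.card = n}

/-! In `Fin n`, the distance of `C_n` is `min (y - x) (x - y)`. Of four vertices in cyclic
order `p₀ < p₁ < p₂ < p₃`, one of the arcs `p₀ → p₂`, `p₂ → p₀` is at most half the cycle, and
the vertex inside it lies on a geodesic between its ends; so general position sets have at most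
three vertices. Three vertices whose cyclic gaps are all positive and shorter than `n / 2` are in
general position. For `n ≥ 5`, `n ≠ 6`, the gaps `a = b = ⌊(n - 1)/2⌋`, `c = n - a - b ∈ {1, 2}`
leave room for the robots to advance one vertex at a time, in turn, keeping every gap below
`n / 2`, so they sweep around the whole cycle; for `n = 3` all vertices are in general position. -/

open SimpleGraph Finset
open Fin.NatCast Fin.CommRing

variable {n : ℕ}

lemma Fin.val_sub_add_val_eq_or (a b : Fin n) :
    (a - b).val + b.val = a.val ∨ (a - b).val + b.val = a.val + n := by
  rcases le_or_gt b a with h | h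
  · left
    rw [Fin.sub_val_of_le h]
    have : b.val ≤ a.val := h
    omega
  · right
    rw [Fin.coe_sub_iff_lt.2 h]
    have : a.val < b.val := h
    omega

def IsShortArc (x y : Fin n) : Prop :=
  0 < (y - x).val ∧ 2 * (y - x).val < n

lemma IsShortArc.ne {x y : Fin n} (h : IsShortArc x y) : x ≠ y := by
  rintro rfl
  simp [IsShortArc, Fin.sub_val_of_le le_rfl] at h

lemma isShortArc_natCast [NeZero n] {s t : ℕ} (hst : s < t) (h : 2 * (t - s) < n) :
    IsShortArc (s : Fin n) t := by
  have hval : ((t : Fin n) - s).val = t - s := by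
    rw [← Nat.cast_sub hst.le, Fin.val_natCast, Nat.mod_eq_of_lt (by omega)]
  rw [IsShortArc, hval]
  omega

lemma isMobileGPSet_univ {V : Type*} [Fintype V] [DecidableEq V] {G : SimpleGraph V}
    (h : IsGPSet G univ) : IsMobileGPSet G univ :=
  ⟨h, 0, fun _ => univ, rfl, fun _ hi => absurd hi (Nat.not_lt_zero _),
    fun v => ⟨0, le_rfl, mem_univ v⟩⟩

lemma mob_eq_of_forall_card_le {V : Type*} [DecidableEq V] {G : SimpleGraph V} {k : ℕ}
    (hex : ∃ S, IsMobileGPSet G S ∧ S.card = k) (hle : ∀ S, IsGPSet G S → S.card ≤ k) :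
    mob G = k :=
  IsGreatest.csSup_eq ⟨hex, by rintro _ ⟨S, hS, rfl⟩; exact hle S hS.1⟩

namespace SimpleGraph

lemma isGPSet_triple {V : Type*} [DecidableEq V] {G : SimpleGraph V} {x y z : V}
    (hx : G.dist z x + G.dist x y ≠ G.dist z y) (hy : G.dist x y + G.dist y z ≠ G.dist x z)
    (hz : G.dist y z + G.dist z x ≠ G.dist y x) : IsGPSet G {x, y, z} := by
  intro p hp q hq r hr hpq hqr hpr
  simp only [mem_insert, mem_singleton] at hp hq hr
  rcases hp with rfl | rfl | rfl <;> rcases hq with rfl | rfl | rfl <;>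
    rcases hr with rfl | rfl | rfl <;> simp_all [dist_comm, add_comm]

lemma cycleGraph_dist_le_val_sub [NeZero n] (u v : Fin n) :
    (cycleGraph n).dist u v ≤ (v - u).val := by
  induction hk : (v - u).val generalizing v with
  | zero =>
    rw [Fin.val_eq_zero_iff, sub_eq_zero] at hk
    simp [hk]
  | succ k ih =>
    have hn : 1 < n := by have := (v - u).isLt; omega
    have hone : (1 : Fin n).val = 1 := by rw [Fin.val_one', Nat.mod_eq_of_lt hn]
    have hadj : (cycleGraph n).Adj (v - 1) v := by
      rw [cycleGraph_adj', sub_sub_cancel, hone]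
      exact Or.inr rfl
    have hprev : (v - 1 - u).val = k := by
      rw [sub_right_comm, Fin.sub_val_of_le (by rw [Fin.le_def, hone, hk]; omega), hk, hone]
      rfl
    calc (cycleGraph n).dist u v
        ≤ (cycleGraph n).dist u (v - 1) + (cycleGraph n).dist (v - 1) v :=
          (cycleGraph_preconnected u (v - 1)).dist_triangle_left v
      _ ≤ k + 1 := by rw [dist_eq_one_iff_adj.2 hadj]; exact Nat.add_le_add_right (ih _ hprev) 1

lemma cycleGraph_min_val_sub_le_length {u v : Fin n} (w : (cycleGraph n).Walk u v) :
    min (v - u).val (u - v).val ≤ w.length := by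
  induction w with
  | nil => simp [Fin.sub_val_of_le le_rfl]
  | @cons u x v hadj w ih =>
    rw [cycleGraph_adj'] at hadj
    have := Fin.val_sub_add_val_eq_or v u
    have := Fin.val_sub_add_val_eq_or u v
    have := Fin.val_sub_add_val_eq_or v x
    have := Fin.val_sub_add_val_eq_or x v
    have := Fin.val_sub_add_val_eq_or u x
    have := Fin.val_sub_add_val_eq_or x u
    have := (v - u).isLt; have := (u - v).isLt; have := (v - x).isLt; have := (x - v).isLt
    rw [Walk.length_cons]
    omega

theorem cycleGraph_dist_eq_min [NeZero n] (u v : Fin n) :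
    (cycleGraph n).dist u v = min (v - u).val (u - v).val := by
  refine le_antisymm (le_min (cycleGraph_dist_le_val_sub u v) ?_) ?_
  · rw [dist_comm]
    exact cycleGraph_dist_le_val_sub v u
  · obtain ⟨w, hw⟩ := (cycleGraph_preconnected u v).exists_walk_length_eq_dist
    exact hw ▸ cycleGraph_min_val_sub_le_length w

lemma cycleGraph_dist_of_le [NeZero n] {x y : Fin n} (h : x ≤ y) :
    (cycleGraph n).dist x y = min (y.val - x.val) (n - (y.val - x.val)) := by
  rw [cycleGraph_dist_eq_min, Fin.sub_val_of_le h]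
  rcases h.eq_or_lt with rfl | hlt
  · simp
  · rw [Fin.coe_sub_iff_lt.2 hlt]
    have : x.val < y.val := hlt
    omega

theorem card_le_three_of_isGPSet_cycleGraph {S : Finset (Fin n)}
    (hS : IsGPSet (cycleGraph n) S) : S.card ≤ 3 := by
  by_contra! hcard
  obtain ⟨T, hTS, hT⟩ := exists_subset_card_eq (show 4 ≤ S.card from hcard)
  set p := T.orderEmbOfFin hT
  have : NeZero n := ⟨(Fin.pos (p 0)).ne'⟩
  have mem (i : Fin 4) : p i ∈ S := hTS (T.orderEmbOfFin_mem hT i)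
  have h01 : p 0 < p 1 := p.strictMono (by decide)
  have h12 : p 1 < p 2 := p.strictMono (by decide)
  have h23 : p 2 < p 3 := p.strictMono (by decide)
  have h02 := h01.trans h12
  have h03 := h02.trans h23
  have through1 := hS _ (mem 0) _ (mem 1) _ (mem 2) h01.ne h12.ne h02.ne
  have through3 := hS _ (mem 2) _ (mem 3) _ (mem 0) h23.ne h03.ne' h02.ne'
  rw [dist_comm (u := p 3) (v := p 0), dist_comm (u := p 2) (v := p 0)] at through3
  rw [cycleGraph_dist_of_le h01.le, cycleGraph_dist_of_le h12.le,
    cycleGraph_dist_of_le h02.le] at through1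
  rw [cycleGraph_dist_of_le h23.le, cycleGraph_dist_of_le h03.le,
    cycleGraph_dist_of_le h02.le] at through3
  have : (p 0).val < (p 1).val := h01
  have : (p 1).val < (p 2).val := h12
  have : (p 2).val < (p 3).val := h23
  have := (p 3).isLt
  -- One of the arcs `p 0 → p 2`, `p 2 → p 0` has length at most `n / 2`; the point of `T`
  -- inside it lies on a geodesic between its ends.
  omega

lemma cycleGraph_dist_add_dist_ne [NeZero n] {x y z : Fin n} (hxy : IsShortArc x y)
    (hyz : IsShortArc y z) (hzx : IsShortArc z x) :
    (cycleGraph n).dist x y + (cycleGraph n).dist y z ≠ (cycleGraph n).dist x z := by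
  unfold IsShortArc at hxy hyz hzx
  rw [cycleGraph_dist_eq_min, cycleGraph_dist_eq_min, cycleGraph_dist_eq_min]
  have := Fin.val_sub_add_val_eq_or y x
  have := Fin.val_sub_add_val_eq_or x y
  have := Fin.val_sub_add_val_eq_or z y
  have := Fin.val_sub_add_val_eq_or y z
  have := Fin.val_sub_add_val_eq_or x z
  have := Fin.val_sub_add_val_eq_or z x
  have := x.isLt; have := y.isLt; have := z.isLt
  -- `dist x z` is the gap `z → x`, shorter than `n / 2` and so than the other two gaps together.
  omega

lemma isGPSet_cycleGraph_of_isShortArc [NeZero n] {x y z : Fin n}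
    (hxy : IsShortArc x y) (hyz : IsShortArc y z) (hzx : IsShortArc z x) :
    IsGPSet (cycleGraph n) {x, y, z} :=
  isGPSet_triple (cycleGraph_dist_add_dist_ne hzx hxy hyz)
    (cycleGraph_dist_add_dist_ne hxy hyz hzx)
    (cycleGraph_dist_add_dist_ne hyz hzx hxy)

lemma isGPSet_cycleGraph_three_univ : IsGPSet (cycleGraph 3) univ := by
  rw [show (univ : Finset (Fin 3)) = {0, 1, 2} by decide]
  exact isGPSet_cycleGraph_of_isShortArc ⟨by decide, by decide⟩ ⟨by decide, by decide⟩
    ⟨by decide, by decide⟩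

lemma legalMove_cycleGraph_add_one [NeZero n] {x y z : Fin n}
    (hxy : IsShortArc x y) (hyz : IsShortArc y z) (hzx : IsShortArc z x)
    (hxy' : IsShortArc (x + 1) y) (hzx' : IsShortArc z (x + 1)) :
    LegalMove (cycleGraph n) {x, y, z} {x + 1, y, z} := by
  have hn : 1 < n := by have := hxy.2; have := hxy.1; omega
  have hone : (1 : Fin n).val = 1 := by rw [Fin.val_one', Nat.mod_eq_of_lt hn]
  have hx : x ∉ ({y, z} : Finset (Fin n)) := by
    simp only [mem_insert, mem_singleton, not_or]
    exact ⟨hxy.ne, hzx.ne.symm⟩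
  refine ⟨x, mem_insert_self _ _, x + 1, ?_, ?_, by rw [erase_insert hx],
    isGPSet_cycleGraph_of_isShortArc hxy' hyz hzx'⟩
  · simp only [mem_insert, mem_singleton, not_or]
    refine ⟨fun h => ?_, hxy'.ne, hzx'.ne.symm⟩
    rw [← sub_eq_zero, add_sub_cancel_left, Fin.ext_iff, hone] at h
    exact one_ne_zero h
  · rw [cycleGraph_adj', add_sub_cancel_left, hone]
    exact Or.inr rfl

end SimpleGraph

section RobotTour

/-- Robots start at `0`, `a`, `a + b` and move forward one vertex at a time, in turn, so after
`i` moves they have advanced `⌈i/3⌉`, `⌈(i-1)/3⌉` and `⌊i/3⌋` vertices. -/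
def robotTour (n a b : ℕ) [NeZero n] (i : ℕ) : Finset (Fin n) :=
  {(((i + 2) / 3 : ℕ) : Fin n), ((a + (i + 1) / 3 : ℕ) : Fin n), ((a + b + i / 3 : ℕ) : Fin n)}

variable [NeZero n] {a b : ℕ}

lemma robotTour_eq {i p q r : ℕ} (hp : (i + 2) / 3 = p) (hq : a + (i + 1) / 3 = q)
    (hr : a + b + i / 3 = r) : robotTour n a b i = {(p : Fin n), (q : Fin n), (r : Fin n)} := by
  subst hp hq hr
  rfl

lemma isShortArc_robotTour (ha : 2 ≤ a) (hb : 2 ≤ b) (ha' : 2 * a < n) (hb' : 2 * b < n)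
    (hc : 2 * (n - a - b) + 2 < n) {i p q r : ℕ} (hp : (i + 2) / 3 = p)
    (hq : a + (i + 1) / 3 = q) (hr : a + b + i / 3 = r) :
    IsShortArc (p : Fin n) q ∧ IsShortArc (q : Fin n) r ∧ IsShortArc (r : Fin n) p := by
  refine ⟨isShortArc_natCast (by omega) (by omega), isShortArc_natCast (by omega) (by omega), ?_⟩
  simpa using isShortArc_natCast (n := n) (s := r) (t := p + n) (by omega) (by omega)

lemma legalMove_robotTour (ha : 2 ≤ a) (hb : 2 ≤ b) (ha' : 2 * a < n) (hb' : 2 * b < n)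
    (hc : 2 * (n - a - b) + 2 < n) (i : ℕ) :
    LegalMove (cycleGraph n) (robotTour n a b i) (robotTour n a b (i + 1)) := by
  have tour (i p q r : ℕ) (hp : (i + 2) / 3 = p) (hq : a + (i + 1) / 3 = q)
      (hr : a + b + i / 3 = r) :=
    And.intro (robotTour_eq (n := n) hp hq hr) (isShortArc_robotTour ha hb ha' hb' hc hp hq hr)
  have rotate (x y z : Fin n) : ({x, y, z} : Finset (Fin n)) = {y, z, x} := by
    rw [insert_comm, pair_comm]
  obtain ⟨k, rfl | rfl | rfl⟩ : ∃ k, i = 3 * k ∨ i = 3 * k + 1 ∨ i = 3 * k + 2 :=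
    ⟨i / 3, by omega⟩
  · obtain ⟨e, hPQ, hQR, hRP⟩ := tour (3 * k) k (a + k) (a + b + k)
      (by omega) (by omega) (by omega)
    obtain ⟨e', hPQ', -, hRP'⟩ := tour (3 * k + 1) (k + 1) (a + k) (a + b + k)
      (by omega) (by omega) (by omega)
    rw [Nat.cast_succ k] at e' hPQ' hRP'
    rw [e, e']
    exact legalMove_cycleGraph_add_one hPQ hQR hRP hPQ' hRP'
  · obtain ⟨e, hPQ, hQR, hRP⟩ := tour (3 * k + 1) (k + 1) (a + k) (a + b + k)
      (by omega) (by omega) (by omega)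
    obtain ⟨e', hPQ', hQR', -⟩ := tour (3 * k + 2) (k + 1) (a + k + 1) (a + b + k)
      (by omega) (by omega) (by omega)
    rw [Nat.cast_succ (a + k)] at e' hPQ' hQR'
    rw [e, e', rotate, rotate _ (_ + 1)]
    exact legalMove_cycleGraph_add_one hQR hRP hPQ hQR' hPQ'
  · obtain ⟨e, hPQ, hQR, hRP⟩ := tour (3 * k + 2) (k + 1) (a + k + 1) (a + b + k)
      (by omega) (by omega) (by omega)
    obtain ⟨e', -, hQR', hRP'⟩ := tour (3 * k + 2 + 1) (k + 1) (a + k + 1) (a + b + k + 1)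
      (by omega) (by omega) (by omega)
    rw [Nat.cast_succ (a + b + k)] at e' hQR' hRP'
    rw [e, e', ← rotate, ← rotate (_ + 1)]
    exact legalMove_cycleGraph_add_one hRP hPQ hQR hRP' hQR'

theorem exists_isMobileGPSet_cycleGraph_card_three (ha : 2 ≤ a) (hb : 2 ≤ b) (ha' : 2 * a < n)
    (hb' : 2 * b < n) (hc : 2 * (n - a - b) + 2 < n) :
    ∃ S, IsMobileGPSet (cycleGraph n) S ∧ S.card = 3 := by
  obtain ⟨hPQ, hQR, hRP⟩ := isShortArc_robotTour (n := n) ha hb ha' hb' hc (i := 0) rfl rfl rfl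
  have e : robotTour n a b 0 = {((0 : ℕ) : Fin n), (a : Fin n), ((a + b : ℕ) : Fin n)} :=
    robotTour_eq rfl rfl rfl
  refine ⟨robotTour n a b 0, ⟨?_, 3 * n, robotTour n a b, rfl,
    fun i _ => legalMove_robotTour ha hb ha' hb' hc i, fun v => ⟨3 * v.val, by omega, ?_⟩⟩, ?_⟩
  · rw [e]
    exact isGPSet_cycleGraph_of_isShortArc hPQ hQR hRP
  · rw [robotTour, show (3 * v.val + 2) / 3 = v.val by omega, Fin.cast_val_eq_self]
    exact mem_insert_self _ _
  · rw [e]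
    exact card_eq_three.2 ⟨_, _, _, hPQ.ne, hRP.ne.symm, hQR.ne, rfl⟩

end RobotTour

/-- For every `n ≥ 3` with `n ≠ 4` and `n ≠ 6`, `mob(Cₙ) = 3`. -/
theorem stmt4 (n : ℕ) (hn : 3 ≤ n) (h4 : n ≠ 4) (h6 : n ≠ 6) :
    mob (SimpleGraph.cycleGraph n) = 3 := by
  have : NeZero n := ⟨by omega⟩
  refine mob_eq_of_forall_card_le ?_ fun S hS => card_le_three_of_isGPSet_cycleGraph hS
  rcases eq_or_ne n 3 with rfl | h3
  · exact ⟨univ, isMobileGPSet_univ isGPSet_cycleGraph_three_univ, rfl⟩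
  · exact exists_isMobileGPSet_cycleGraph_card_three (a := (n - 1) / 2) (b := (n - 1) / 2)
      (by omega) (by omega) (by omega) (by omega) (by omega)
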